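/- arXiv:1204.3346 — 2 statements merged into one kernel-verified Lean document; each statement's English description precedes it below -/
import Mathlib

section
/- A finite poset x is a product of both the 2-element chain and the 2-element antichain if and only if x has at least two minimal vertices, at least one of which has a single-parent child. -/
/-- A causet: a finite partial order on a finite set of labels. -/
structure Causet where
  carrier : Finset ℕ
  rel : ℕ → ℕ → Prop
  rel_mem : ∀ a b, rel a b → a ∈ carrier ∧ b ∈ carrier
  irrefl : ∀ a, ¬ rel a a
  trans : ∀ a b c, rel a b → rel b c → rel a c

namespace Causet

/-- A minimal vertex. -/
def Minimal (x : Causet) (a : ℕ) : Prop :=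
  a ∈ x.carrier ∧ ∀ b, ¬ x.rel b a

/-- A maximal vertex. -/
def Maximal (x : Causet) (a : ℕ) : Prop :=
  a ∈ x.carrier ∧ ∀ b, ¬ x.rel a b

/-- `a` is a parent of `b` (a lower cover). -/
def Parent (x : Causet) (a b : ℕ) : Prop :=
  x.rel a b ∧ ∀ c, ¬ (x.rel a c ∧ x.rel c b)

/-- `y` is obtained from `x` by adjoining the single new element `a`, maximal in `y`. -/
def ProducesWith (x y : Causet) (a : ℕ) : Prop :=
  a ∉ x.carrier ∧ y.carrier = insert a x.carrier ∧ y.Maximal a ∧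
    ∀ u v, u ∈ x.carrier → v ∈ x.carrier → (y.rel u v ↔ x.rel u v)

/-- `x → y`: `y` is obtained from `x` by adjoining a single maximal element. -/
def Produces (x y : Causet) : Prop := ∃ a, ProducesWith x y a

/-- `y` is a product of `x`: `y = x` or there is a chain of productions from `x` to `y`. -/
def ProductOf (x y : Causet) : Prop := Relation.ReflTransGen Produces x y

/-- `x` is (a copy of) the 2-element chain. -/
def IsTwoChain (x : Causet) : Prop :=
  ∃ a b, a ≠ b ∧ x.carrier = {a, b} ∧ x.rel a b ∧ ∀ u v, x.rel u v → u = a ∧ v = b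

/-- `x` is (a copy of) the 2-element antichain. -/
def IsTwoAntichain (x : Causet) : Prop :=
  ∃ a b, a ≠ b ∧ x.carrier = {a, b} ∧ ∀ u v, ¬ x.rel u v

/-- `x` has at least two minimal vertices. -/
def TwoMinimal (x : Causet) : Prop :=
  ∃ a b, a ≠ b ∧ x.Minimal a ∧ x.Minimal b

/-- The minimal vertex `a` has a single-parent child (a child whose unique parent is `a`). -/
def MinWithSPC (x : Causet) (a : ℕ) : Prop :=
  x.Minimal a ∧ ∃ c, x.Parent a c ∧ ∀ d, x.Parent d c → d = a

/-- `x` is mixed: at least two minimal vertices, at least one of which has a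
single-parent child. -/
def Mixed (x : Causet) : Prop :=
  TwoMinimal x ∧ ∃ a, MinWithSPC x a

attribute [local instance] Classical.propDecidable

lemma ext' {x y : Causet} (h1 : x.carrier = y.carrier)
    (h2 : ∀ a b, x.rel a b ↔ y.rel a b) : x = y := by
  obtain ⟨c1, r1, _, _, _⟩ := x
  obtain ⟨c2, r2, _, _, _⟩ := y
  obtain rfl : c1 = c2 := h1
  obtain rfl : r1 = r2 := by funext a b; exact propext (h2 a b)
  rfl

def restrict (x : Causet) (S : Finset ℕ) : Causet where
  carrier := S ∩ x.carrier
  rel a b := x.rel a b ∧ a ∈ S ∧ b ∈ S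
  rel_mem a b h := ⟨Finset.mem_inter.2 ⟨h.2.1, (x.rel_mem a b h.1).1⟩,
    Finset.mem_inter.2 ⟨h.2.2, (x.rel_mem a b h.1).2⟩⟩
  irrefl a h := x.irrefl a h.1
  trans a b c h1 h2 := ⟨x.trans a b c h1.1 h2.1, h1.2.1, h2.2.2⟩

/-- Any strict predecessor of `c` lies (weakly) below some parent of `c`. -/
lemma exists_parent_above (x : Causet) :
    ∀ n d c, (x.carrier.filter (fun e => x.rel d e)).card ≤ n → x.rel d c →
      ∃ p, x.Parent p c ∧ (d = p ∨ x.rel d p) := by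
  intro n
  induction n with
  | zero =>
    intro d c hcard h
    exfalso
    have hc : c ∈ x.carrier.filter (fun e => x.rel d e) :=
      Finset.mem_filter.2 ⟨(x.rel_mem d c h).2, h⟩
    have := Finset.card_pos.2 ⟨c, hc⟩
    omega
  | succ n ih =>
    intro d c hcard h
    by_cases hp : ∀ e, ¬ (x.rel d e ∧ x.rel e c)
    · exact ⟨d, ⟨h, hp⟩, Or.inl rfl⟩
    · push_neg at hp
      obtain ⟨f, hdf, hfc⟩ := hp
      have hss : x.carrier.filter (fun e => x.rel f e) ⊂
          x.carrier.filter (fun e => x.rel d e) := by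
        constructor
        · intro e he
          rw [Finset.mem_filter] at he ⊢
          exact ⟨he.1, x.trans _ _ _ hdf he.2⟩
        · intro hsub
          have hf : f ∈ x.carrier.filter (fun e => x.rel d e) :=
            Finset.mem_filter.2 ⟨(x.rel_mem d f hdf).2, hdf⟩
          have := Finset.mem_filter.1 (hsub hf)
          exact x.irrefl f this.2
      have hcard' : (x.carrier.filter (fun e => x.rel f e)).card ≤ n := by
        have := Finset.card_lt_card hss
        omega
      obtain ⟨p, hpp, hfp⟩ := ih f c hcard' hfc
      refine ⟨p, hpp, Or.inr ?_⟩
      rcases hfp with rfl | hfp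
      · exact hdf
      · exact x.trans _ _ _ hdf hfp


lemma exists_min_compl (x : Causet) (S : Finset ℕ) :
    ∀ n a, (x.carrier.filter (fun e => x.rel e a)).card ≤ n → a ∈ x.carrier → a ∉ S →
      ∃ b, b ∈ x.carrier ∧ b ∉ S ∧ ∀ d, x.rel d b → d ∈ S := by
  intro n
  induction n with
  | zero =>
    intro a hcard ha haS
    refine ⟨a, ha, haS, fun d hd => ?_⟩
    exfalso
    have : d ∈ x.carrier.filter (fun e => x.rel e a) :=
      Finset.mem_filter.2 ⟨(x.rel_mem d a hd).1, hd⟩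
    have := Finset.card_pos.2 ⟨d, this⟩
    omega
  | succ n ih =>
    intro a hcard ha haS
    by_cases hall : ∀ d, x.rel d a → d ∈ S
    · exact ⟨a, ha, haS, hall⟩
    · push_neg at hall
      obtain ⟨d, hda, hdS⟩ := hall
      have hss : x.carrier.filter (fun e => x.rel e d) ⊂
          x.carrier.filter (fun e => x.rel e a) := by
        constructor
        · intro e he
          rw [Finset.mem_filter] at he ⊢
          exact ⟨he.1, x.trans _ _ _ he.2 hda⟩
        · intro hsub
          have hd : d ∈ x.carrier.filter (fun e => x.rel e a) :=
            Finset.mem_filter.2 ⟨(x.rel_mem d a hda).1, hda⟩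
          exact x.irrefl d (Finset.mem_filter.1 (hsub hd)).2
      have hcard' : (x.carrier.filter (fun e => x.rel e d)).card ≤ n := by
        have := Finset.card_lt_card hss
        omega
      exact ih d hcard' (x.rel_mem d a hda).1 hdS

/-- The restriction of `x` to a down-closed subset produces `x`. -/
lemma restrict_productOf (x : Causet) :
    ∀ n S, S ⊆ x.carrier → (∀ a b, x.rel a b → b ∈ S → a ∈ S) →
      (x.carrier \ S).card ≤ n → (x.restrict S).ProductOf x := by
  have base : ∀ S, S ⊆ x.carrier → x.carrier \ S = ∅ → (x.restrict S).ProductOf x := by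
    intro S hS hempty
    have hSeq : S = x.carrier := by
      apply Finset.Subset.antisymm hS
      intro a ha
      by_contra haS
      have : a ∈ x.carrier \ S := Finset.mem_sdiff.2 ⟨ha, haS⟩
      simp [hempty] at this
    have : x.restrict S = x := by
      apply ext'
      · simp [restrict, hSeq]
      · intro a b
        constructor
        · exact fun h => h.1
        · intro h
          exact ⟨h, hSeq ▸ (x.rel_mem a b h).1, hSeq ▸ (x.rel_mem a b h).2⟩
    rw [this]
    exact Relation.ReflTransGen.refl
  intro n
  induction n with
  | zero =>
    intro S hS hdown hcard
    exact base S hS (Finset.card_eq_zero.1 (Nat.le_zero.1 hcard))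
  | succ n ih =>
    intro S hS hdown hcard
    rcases Finset.eq_empty_or_nonempty (x.carrier \ S) with hempty | ⟨a, ha⟩
    · exact base S hS hempty
    · rw [Finset.mem_sdiff] at ha
      obtain ⟨b, hbcar, hbS, hbmin⟩ :=
        exists_min_compl x S (x.carrier.filter (fun e => x.rel e a)).card a le_rfl ha.1 ha.2
      set S' := insert b S with hS'
      have hS'sub : S' ⊆ x.carrier := by
        intro e he
        rcases Finset.mem_insert.1 he with rfl | he
        · exact hbcar
        · exact hS he
      have hdown' : ∀ u v, x.rel u v → v ∈ S' → u ∈ S' := by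
        intro u v huv hv
        rcases Finset.mem_insert.1 hv with rfl | hv
        · exact Finset.mem_insert_of_mem (hbmin u huv)
        · exact Finset.mem_insert_of_mem (hdown u v huv hv)
      have hcard' : (x.carrier \ S').card ≤ n := by
        have hlt : (x.carrier \ S') ⊂ (x.carrier \ S) := by
          constructor
          · intro e he
            rw [Finset.mem_sdiff] at he ⊢
            exact ⟨he.1, fun h => he.2 (Finset.mem_insert_of_mem h)⟩
          · intro hsub
            have : b ∈ x.carrier \ S := Finset.mem_sdiff.2 ⟨hbcar, hbS⟩
            have := Finset.mem_sdiff.1 (hsub this)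
            exact this.2 (Finset.mem_insert_self b S)
        have := Finset.card_lt_card hlt
        omega
      have hstep : Produces (x.restrict S) (x.restrict S') := by
        refine ⟨b, ?_, ?_, ⟨?_, ?_⟩, ?_⟩
        · show b ∉ S ∩ x.carrier
          simp [hbS]
        · show S' ∩ x.carrier = insert b (S ∩ x.carrier)
          rw [hS', Finset.insert_inter_of_mem hbcar]
        · show b ∈ S' ∩ x.carrier
          exact Finset.mem_inter.2 ⟨Finset.mem_insert_self b S, hbcar⟩
        · intro c
          show ¬ (x.rel b c ∧ b ∈ S' ∧ c ∈ S')
          rintro ⟨hbc, _, hcS'⟩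
          rcases Finset.mem_insert.1 hcS' with rfl | hcS
          · exact x.irrefl c hbc
          · exact hbS (hdown b c hbc hcS)
        · intro u v hu hv
          have hu' : u ∈ S ∩ x.carrier := hu
          have hv' : v ∈ S ∩ x.carrier := hv
          rw [Finset.mem_inter] at hu' hv'
          show (x.rel u v ∧ u ∈ S' ∧ v ∈ S') ↔ (x.rel u v ∧ u ∈ S ∧ v ∈ S)
          constructor
          · rintro ⟨h, _, _⟩
            exact ⟨h, hu'.1, hv'.1⟩
          · rintro ⟨h, _, _⟩
            exact ⟨h, Finset.mem_insert_of_mem hu'.1, Finset.mem_insert_of_mem hv'.1⟩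
      exact Relation.ReflTransGen.head hstep (ih S' hS'sub hdown' hcard')

lemma minimal_preserved {x y : Causet} {m a : ℕ} (h : ProducesWith x y m)
    (ha : x.Minimal a) : y.Minimal a := by
  obtain ⟨hm, hcar, hmax, hrel⟩ := h
  refine ⟨hcar ▸ Finset.mem_insert_of_mem ha.1, fun b hb => ?_⟩
  have hbmem := (y.rel_mem b a hb).1
  rw [hcar, Finset.mem_insert] at hbmem
  rcases hbmem with rfl | hbx
  · exact hmax.2 a hb
  · exact ha.2 b ((hrel b a hbx ha.1).1 hb)

lemma twoMinimal_preserved {x y : Causet} (h : Produces x y)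
    (hx : TwoMinimal x) : TwoMinimal y := by
  obtain ⟨m, hm⟩ := h
  obtain ⟨a, b, hab, ha, hb⟩ := hx
  exact ⟨a, b, hab, minimal_preserved hm ha, minimal_preserved hm hb⟩

lemma spc_preserved {x y : Causet} (h : Produces x y)
    (hx : ∃ a, MinWithSPC x a) : ∃ a, MinWithSPC y a := by
  obtain ⟨m, hm⟩ := h
  obtain ⟨a, ⟨hamin, c, ⟨hac, hnomid⟩, huniq⟩⟩ := hx
  obtain ⟨hmnot, hcar, hmax, hrel⟩ := hm
  have hax : a ∈ x.carrier := (x.rel_mem a c hac).1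
  have hcx : c ∈ x.carrier := (x.rel_mem a c hac).2
  refine ⟨a, minimal_preserved ⟨hmnot, hcar, hmax, hrel⟩ hamin, c, ⟨?_, ?_⟩, ?_⟩
  · exact (hrel a c hax hcx).2 hac
  · intro d ⟨had, hdc⟩
    have hdmem := (y.rel_mem a d had).2
    rw [hcar, Finset.mem_insert] at hdmem
    rcases hdmem with rfl | hdx
    · exact hmax.2 c hdc
    · exact hnomid d ⟨(hrel a d hax hdx).1 had, (hrel d c hdx hcx).1 hdc⟩
  · rintro d ⟨hdc, hdnomid⟩
    have hdmem := (y.rel_mem d c hdc).1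
    rw [hcar, Finset.mem_insert] at hdmem
    rcases hdmem with rfl | hdx
    · exact absurd hdc (hmax.2 c)
    · refine huniq d ⟨(hrel d c hdx hcx).1 hdc, fun e ⟨hde, hec⟩ => ?_⟩
      have hex : e ∈ x.carrier := (x.rel_mem d e hde).2
      exact hdnomid e ⟨(hrel d e hdx hex).2 hde, (hrel e c hex hcx).2 hec⟩

end Causet

/-- A finite poset `x` is a product of both the 2-element chain and the
2-element antichain iff `x` has at least two minimal vertices, at least one of which
has a single-parent child. -/
theorem stmt2 (x : Causet) :
    ((∃ z : Causet, z.IsTwoChain ∧ z.ProductOf x) ∧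
      (∃ z : Causet, z.IsTwoAntichain ∧ z.ProductOf x)) ↔ Causet.Mixed x := by
  classical
  constructor
  · rintro ⟨⟨z1, hchain, hprod1⟩, ⟨z2, hanti, hprod2⟩⟩
    constructor
    · -- two minimal, from the antichain
      obtain ⟨a, b, hab, hcar, hnone⟩ := hanti
      have hbase : z2.TwoMinimal := by
        refine ⟨a, b, hab, ⟨?_, fun c => hnone c a⟩, ⟨?_, fun c => hnone c b⟩⟩ <;>
          (rw [hcar]; simp)
      clear hcar hnone hprod1
      induction hprod2 with
      | refl => exact hbase
      | tail _ hstep ih => exact Causet.twoMinimal_preserved hstep ih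
    · -- SPC, from the chain
      obtain ⟨a, b, hab, hcar, hrel, honly⟩ := hchain
      have hbase : ∃ c, z1.MinWithSPC c := by
        refine ⟨a, ⟨?_, fun c hc => hab (honly c a hc).2⟩,
          b, ⟨hrel, ?_⟩, fun d hd => (honly d b hd.1).1⟩
        · rw [hcar]; simp
        · rintro e he
          have h1 := (honly a e he.1).2
          have h2 := (honly e b he.2).1
          exact hab (by omega)
      clear hcar hrel honly hprod2
      induction hprod1 with
      | refl => exact hbase
      | tail _ hstep ih => exact Causet.spc_preserved hstep ih
  · rintro ⟨⟨a, b, hab, hamin, hbmin⟩, c, ⟨hcmin, d, ⟨hcd, hnomid⟩, huniq⟩⟩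
    have hax := hamin.1
    have hbx := hbmin.1
    have hcx : c ∈ x.carrier := (x.rel_mem c d hcd).1
    have hdx : d ∈ x.carrier := (x.rel_mem c d hcd).2
    have hcdne : c ≠ d := fun h => x.irrefl c (h ▸ hcd)
    constructor
    · -- product of two-chain: restrict to {c, d}
      refine ⟨x.restrict {c, d}, ⟨c, d, hcdne, ?_, ⟨hcd, by simp⟩, ?_⟩, ?_⟩
      · show ({c, d} : Finset ℕ) ∩ x.carrier = {c, d}
        rw [Finset.inter_eq_left]
        intro e he
        rcases Finset.mem_insert.1 he with rfl | he
        · exact hcx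
        · rw [Finset.mem_singleton.1 he]; exact hdx
      · rintro u v ⟨huv, hu, hv⟩
        simp only [Finset.mem_insert, Finset.mem_singleton] at hu hv
        rcases hu with rfl | rfl <;> rcases hv with rfl | rfl
        · exact absurd huv (x.irrefl _)
        · exact ⟨rfl, rfl⟩
        · exact absurd huv (hcmin.2 _)
        · exact absurd huv (x.irrefl _)
      · apply Causet.restrict_productOf x (x.carrier \ {c, d}).card
        · intro e he
          rcases Finset.mem_insert.1 he with rfl | he
          · exact hcx
          · rw [Finset.mem_singleton.1 he]; exact hdx
        · intro u v huv hv
          rcases Finset.mem_insert.1 hv with rfl | hv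
          · exact absurd huv (hcmin.2 u)
          · obtain rfl : v = d := Finset.mem_singleton.1 hv
            obtain ⟨p, hp, hup⟩ := Causet.exists_parent_above x
              (x.carrier.filter (fun e => x.rel u e)).card u v le_rfl huv
            have : p = c := huniq p hp
            subst this
            rcases hup with rfl | hup
            · exact Finset.mem_insert_self u _
            · exact absurd hup (hcmin.2 u)
        · exact le_rfl
    · -- product of two-antichain: restrict to {a, b}
      refine ⟨x.restrict {a, b}, ⟨a, b, hab, ?_, ?_⟩, ?_⟩
      · show ({a, b} : Finset ℕ) ∩ x.carrier = {a, b}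
        rw [Finset.inter_eq_left]
        intro e he
        rcases Finset.mem_insert.1 he with rfl | he
        · exact hax
        · rw [Finset.mem_singleton.1 he]; exact hbx
      · rintro u v ⟨huv, hu, hv⟩
        simp only [Finset.mem_insert, Finset.mem_singleton] at hv
        rcases hv with rfl | rfl
        · exact hamin.2 _ huv
        · exact hbmin.2 _ huv
      · apply Causet.restrict_productOf x (x.carrier \ {a, b}).card
        · intro e he
          rcases Finset.mem_insert.1 he with rfl | he
          · exact hax
          · rw [Finset.mem_singleton.1 he]; exact hbx
        · intro u v huv hv
          rcases Finset.mem_insert.1 hv with rfl | hv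
          · exact absurd huv (hamin.2 u)
          · obtain rfl : v = b := Finset.mem_singleton.1 hv
            exact absurd huv (hbmin.2 u)
        · exact le_rfl
end

section
/- If x is a finite poset with exactly one minimal vertex and |x| ≥ 2 (a pure antimatter causet), then among all posets y with x → y, exactly one is mixed (has at least two minimal vertices with at least one having a single-parent child), namely the one obtained by adjoining an isolated vertex to x. -/
/-!
The unique minimal vertex `m` of `x` has a child `c` whose only predecessor is `m`: among the
non-minimal vertices take one with fewest predecessors; all its predecessors are then minimal.
A new maximal vertex `a` creates no new minimal vertex except itself, so an offspring with two
minimal vertices must have `a` minimal, i.e. isolated. Conversely, if `a` is isolated then `a`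
and `m` are minimal, and `c` is still a single-parent child of `m`, since `a` lies below nothing.
-/

namespace Causet

variable {x y : Causet} {a c m : ℕ}

open scoped Classical in
noncomputable def below (x : Causet) (v : ℕ) : Finset ℕ := x.carrier.filter (x.rel · v)

lemma mem_below {u v : ℕ} : u ∈ x.below v ↔ x.rel u v := by
  classical
  simp only [below, Finset.mem_filter, and_iff_right_iff_imp]
  exact fun huv => (x.rel_mem u v huv).1

lemma card_below_lt_of_rel {d : ℕ} (h : x.rel d c) : (x.below d).card < (x.below c).card := by
  refine Finset.card_lt_card ⟨fun e he => ?_, fun hsub => ?_⟩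
  · exact mem_below.mpr (x.trans _ _ _ (mem_below.mp he) h)
  · exact x.irrefl d (mem_below.mp (hsub (mem_below.mpr h)))

lemma exists_not_minimal_forall_rel_minimal (hc : c ∈ x.carrier) (hnc : ¬ x.Minimal c) :
    ∃ c', c' ∈ x.carrier ∧ ¬ x.Minimal c' ∧ ∀ d, x.rel d c' → x.Minimal d := by
  classical
  obtain ⟨c', hc', hmin⟩ := (x.carrier.filter (¬ x.Minimal ·)).exists_min_image
    (fun v => (x.below v).card) ⟨c, Finset.mem_filter.mpr ⟨hc, hnc⟩⟩
  obtain ⟨hc'x, hnc'⟩ := Finset.mem_filter.mp hc'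
  refine ⟨c', hc'x, hnc', fun d hd => by_contra fun hnd => ?_⟩
  have := hmin d (Finset.mem_filter.mpr ⟨(x.rel_mem d c' hd).1, hnd⟩)
  exact (card_below_lt_of_rel hd).not_ge this

lemma exists_rel_forall_rel_eq_of_minimal_unique (hx : 2 ≤ x.carrier.card)
    (hmu : ∀ u, x.Minimal u → u = m) : ∃ c, x.rel m c ∧ ∀ d, x.rel d c → d = m := by
  obtain ⟨c, hc, hcm⟩ : ∃ c ∈ x.carrier, c ≠ m := by
    by_contra! h
    have : x.carrier.card ≤ 1 := Finset.card_le_one.mpr fun u hu v hv => (h u hu).trans (h v hv).symm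
    omega
  obtain ⟨c', hc', hnc', hpred⟩ :=
    exists_not_minimal_forall_rel_minimal hc fun h => hcm (hmu c h)
  have hpred' : ∀ d, x.rel d c' → d = m := fun d hd => hmu d (hpred d hd)
  obtain ⟨d, hd⟩ : ∃ d, x.rel d c' := by
    by_contra! h
    exact hnc' ⟨hc', h⟩
  exact ⟨c', hpred' d hd ▸ hd, hpred'⟩

lemma minWithSPC_of_forall_rel_eq (hm : x.Minimal m) (hmc : x.rel m c)
    (hc : ∀ d, x.rel d c → d = m) : x.MinWithSPC m := by
  refine ⟨hm, c, ⟨hmc, ?_⟩, fun d hd => hc d hd.1⟩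
  rintro e ⟨hme, hec⟩
  exact x.irrefl m (hc e hec ▸ hme)

namespace ProducesWith

variable (h : x.ProducesWith y a)
include h

lemma maximal : y.Maximal a := h.2.2.1

lemma rel_iff {u v : ℕ} (hu : u ∈ x.carrier) (hv : v ∈ x.carrier) : y.rel u v ↔ x.rel u v :=
  h.2.2.2 u v hu hv

lemma mem_carrier_iff {u : ℕ} : u ∈ y.carrier ↔ u = a ∨ u ∈ x.carrier := by
  rw [h.2.1, Finset.mem_insert]

lemma rel_iff_of_ne {u v : ℕ} (hv : v ≠ a) : y.rel u v ↔ x.rel u v := by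
  refine ⟨fun huv => ?_, fun huv => ?_⟩
  · obtain ⟨hu, hv'⟩ := y.rel_mem u v huv
    have hux : u ∈ x.carrier :=
      (h.mem_carrier_iff.mp hu).resolve_left fun hua => h.maximal.2 v (hua ▸ huv)
    exact (h.rel_iff hux (h.mem_carrier_iff.mp hv' |>.resolve_left hv)).mp huv
  · obtain ⟨hu, hv'⟩ := x.rel_mem u v huv
    exact (h.rel_iff hu hv').mpr huv

lemma minimal_of_minimal {u : ℕ} (hu : y.Minimal u) (hux : u ∈ x.carrier) : x.Minimal u :=
  ⟨hux, fun b hb => hu.2 b ((h.rel_iff_of_ne fun hua => h.1 (hua ▸ hux)).mpr hb)⟩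

lemma minimal_of_twoMinimal (hmu : ∀ u, x.Minimal u → u = m) (hy : y.TwoMinimal) :
    y.Minimal a := by
  obtain ⟨p, q, hpq, hp, hq⟩ := hy
  rcases h.mem_carrier_iff.mp hp.1 with rfl | hpx
  · exact hp
  rcases h.mem_carrier_iff.mp hq.1 with rfl | hqx
  · exact hq
  exact absurd ((hmu p (h.minimal_of_minimal hp hpx)).trans
    (hmu q (h.minimal_of_minimal hq hqx)).symm) hpq

lemma mixed_of_isolated (hm : x.Minimal m) (hmc : x.rel m c) (hc : ∀ d, x.rel d c → d = m)
    (ha : ∀ b, ¬ y.rel b a) : y.Mixed := by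
  have hca : c ≠ a := fun hca => h.1 (hca ▸ (x.rel_mem m c hmc).2)
  have hym : y.Minimal m := by
    refine ⟨h.mem_carrier_iff.mpr (Or.inr hm.1), fun b hb => ?_⟩
    exact hm.2 b ((h.rel_iff_of_ne fun hma => h.1 (hma ▸ hm.1)).mp hb)
  refine ⟨⟨a, m, fun ham => h.1 (ham ▸ hm.1), ⟨h.maximal.1, ha⟩, hym⟩, m, ?_⟩
  exact minWithSPC_of_forall_rel_eq hym ((h.rel_iff_of_ne hca).mpr hmc)
    fun d hd => hc d ((h.rel_iff_of_ne hca).mp hd)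

end ProducesWith

def insertIsolated (x : Causet) (a : ℕ) : Causet where
  carrier := insert a x.carrier
  rel := x.rel
  rel_mem u v huv := ⟨Finset.mem_insert_of_mem (x.rel_mem u v huv).1,
    Finset.mem_insert_of_mem (x.rel_mem u v huv).2⟩
  irrefl := x.irrefl
  trans := x.trans

lemma not_insertIsolated_rel_left (ha : a ∉ x.carrier) (b : ℕ) : ¬ (x.insertIsolated a).rel a b :=
  fun hab => ha (x.rel_mem a b hab).1

lemma not_insertIsolated_rel_right (ha : a ∉ x.carrier) (b : ℕ) :
    ¬ (x.insertIsolated a).rel b a :=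
  fun hba => ha (x.rel_mem b a hba).2

lemma producesWith_insertIsolated (ha : a ∉ x.carrier) : x.ProducesWith (x.insertIsolated a) a :=
  ⟨ha, rfl, ⟨Finset.mem_insert_self a _, not_insertIsolated_rel_left ha⟩,
    fun _ _ _ _ => Iff.rfl⟩

end Causet

/-- If `x` has exactly one minimal vertex and `|x| ≥ 2` (pure antimatter),
then among the offspring of `x`, exactly one is mixed, namely the one obtained by
adjoining an isolated vertex: an offspring is mixed iff its adjoined vertex is isolated,
and a mixed offspring exists. -/
theorem stmt5 (x : Causet) (hx : 2 ≤ x.carrier.card) (hone : ∃! a, x.Minimal a) :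
    (∀ y a, x.ProducesWith y a →
        (y.Mixed ↔ (∀ b, ¬ y.rel b a) ∧ (∀ b, ¬ y.rel a b))) ∧
    ∃ y a, x.ProducesWith y a ∧ y.Mixed ∧ (∀ b, ¬ y.rel b a) ∧ (∀ b, ¬ y.rel a b) := by
  obtain ⟨m, hm, hmu⟩ := hone
  obtain ⟨c, hmc, hc⟩ := Causet.exists_rel_forall_rel_eq_of_minimal_unique hx hmu
  have mixed_iff : ∀ y a, x.ProducesWith y a →
      (y.Mixed ↔ (∀ b, ¬ y.rel b a) ∧ (∀ b, ¬ y.rel a b)) := fun y a h =>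
    ⟨fun hy => ⟨(h.minimal_of_twoMinimal hmu hy.1).2, h.maximal.2⟩,
      fun hiso => h.mixed_of_isolated hm hmc hc hiso.1⟩
  obtain ⟨a, ha⟩ := Infinite.exists_notMem_finset x.carrier
  have hprod := Causet.producesWith_insertIsolated ha
  have hiso := And.intro (Causet.not_insertIsolated_rel_right ha)
    (Causet.not_insertIsolated_rel_left ha)
  exact ⟨mixed_iff, _, a, hprod, (mixed_iff _ a hprod).mpr hiso, hiso⟩
end
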